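/- For every real number z > 0 that is not an integer, with n = ⌊z⌋, one has 1/Γ(z) = (sin(πz)/π) · ∫₀^1 (1 − e_{n−1}(log u)/u) · (log(1/u))^{−z} du, where the integral is over the interval (0, 1). -/

import Mathlib

/-!
Substituting `u = exp (-t)` turns the integral into `∫₀^∞ (e^{-t} - e_{n-1}(-t)) t^{-z} dt`, a
Cauchy–Saalschütz integral. For `-n < s < 1 - n`, removing the first `n` Taylor terms of `e^{-t}`
makes `∫₀^∞ (e^{-t} - e_{n-1}(-t)) t^{s-1} dt` converge at both ends, and one integration by parts
against `t^s` (the boundary terms vanish) reduces it to the same integral with `(n - 1, s + 1)`.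
By induction on `n` it equals `Γ(s)`, starting from Euler's integral at `n = 0`. With `s = 1 - z`
this gives `Γ(1 - z)`, and the reflection formula `Γ(z) Γ(1 - z) = π / sin (π z)` concludes.
-/

open MeasureTheory Real Filter Set
open scoped Topology

/-- Truncated exponential polynomial `e_n(x) = ∑_{k=0}^{n} x^k / k!`.
Note that `e_{n-1}(x)` corresponds to `∑ k in Finset.range n, x^k / k!`. -/
noncomputable def truncExpPrev (n : ℕ) (x : ℝ) : ℝ :=
  ∑ k ∈ Finset.range n, x ^ k / (k.factorial : ℝ)

noncomputable def expNegTail (n : ℕ) (t : ℝ) : ℝ := exp (-t) - truncExpPrev n (-t)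

lemma hasDerivAt_truncExpPrev_succ (n : ℕ) (x : ℝ) :
    HasDerivAt (truncExpPrev (n + 1)) (truncExpPrev n x) x := by
  have h : HasDerivAt (truncExpPrev (n + 1))
      (∑ k ∈ Finset.range (n + 1), (k : ℝ) * x ^ (k - 1) / k.factorial) x := by
    refine HasDerivAt.fun_sum fun k _ => ?_
    simpa [div_eq_mul_inv, mul_comm] using (hasDerivAt_pow k x).div_const (k.factorial : ℝ)
  convert h using 1
  rw [Finset.sum_range_succ', truncExpPrev]
  simp only [Nat.cast_zero, zero_mul, zero_div, add_zero]
  refine Finset.sum_congr rfl fun k _ => ?_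
  rw [Nat.factorial_succ]
  push_cast
  field_simp

lemma hasDerivAt_expNegTail_succ (n : ℕ) (t : ℝ) :
    HasDerivAt (expNegTail (n + 1)) (-expNegTail n t) t := by
  have h := ((hasDerivAt_neg t).exp).sub ((hasDerivAt_truncExpPrev_succ n (-t)).comp t
    (hasDerivAt_neg t))
  exact h.congr_deriv (by simp only [expNegTail]; ring)

lemma continuous_expNegTail (n : ℕ) : Continuous (expNegTail n) := by
  unfold expNegTail truncExpPrev
  fun_prop

lemma expNegTail_succ_zero (n : ℕ) : expNegTail (n + 1) 0 = 0 := by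
  simp [expNegTail, truncExpPrev, Finset.sum_range_succ']

lemma abs_expNegTail_le (n : ℕ) {t : ℝ} (ht : 0 ≤ t) :
    |expNegTail n t| ≤ t ^ n / n.factorial := by
  induction n generalizing t with
  | zero =>
    simpa [expNegTail, truncExpPrev, abs_of_pos (exp_pos _)] using ht
  | succ n ih =>
    have hFTC : ∫ u in (0 : ℝ)..t, -expNegTail n u = expNegTail (n + 1) t := by
      rw [intervalIntegral.integral_eq_sub_of_hasDerivAt
        (fun u _ => hasDerivAt_expNegTail_succ n u)
        ((continuous_expNegTail n).neg.intervalIntegrable 0 t), expNegTail_succ_zero, sub_zero]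
    calc |expNegTail (n + 1) t| = |∫ u in (0 : ℝ)..t, -expNegTail n u| := by rw [hFTC]
      _ ≤ ∫ u in (0 : ℝ)..t, |-expNegTail n u| :=
          intervalIntegral.abs_integral_le_integral_abs ht
      _ ≤ ∫ u in (0 : ℝ)..t, u ^ n / n.factorial := by
          refine intervalIntegral.integral_mono_on ht
            ((continuous_expNegTail n).neg.abs.intervalIntegrable 0 t)
            ((intervalIntegral.intervalIntegrable_pow n).div_const _) fun u hu => ?_
          rw [abs_neg]
          exact ih hu.1
      _ = t ^ (n + 1) / (n + 1).factorial := by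
          rw [intervalIntegral.integral_div, integral_pow, Nat.factorial_succ]
          push_cast
          field_simp
          simp

lemma rpow_mul_truncExpPrev_neg (n : ℕ) (s : ℝ) {t : ℝ} (ht : 0 < t) :
    t ^ s * truncExpPrev n (-t) =
      ∑ k ∈ Finset.range n, (-1 : ℝ) ^ k / k.factorial * t ^ (s + k) := by
  rw [truncExpPrev, Finset.mul_sum]
  refine Finset.sum_congr rfl fun k _ => ?_
  rw [rpow_add ht, rpow_natCast, neg_pow]
  ring

lemma integrableOn_Ioc_expNegTail_mul_rpow {n : ℕ} {s : ℝ} (hs : 0 < s + n) :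
    IntegrableOn (fun t => expNegTail n t * t ^ (s - 1)) (Ioc 0 1) := by
  have hbound : IntegrableOn (fun t : ℝ => t ^ (s + n - 1) / n.factorial) (Ioc 0 1) := by
    have h := (intervalIntegral.intervalIntegrable_rpow' (a := 0) (b := 1)
      (r := s + n - 1) (by linarith)).div_const (n.factorial : ℝ)
    rwa [intervalIntegrable_iff_integrableOn_Ioc_of_le zero_le_one] at h
  refine hbound.mono' ((continuous_expNegTail n).aestronglyMeasurable.mul
    (Measurable.aestronglyMeasurable (by fun_prop))) ?_
  filter_upwards [ae_restrict_mem measurableSet_Ioc] with t ht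
  calc ‖expNegTail n t * t ^ (s - 1)‖ = |expNegTail n t| * t ^ (s - 1) := by
        rw [norm_mul, norm_eq_abs, norm_of_nonneg (rpow_nonneg ht.1.le _)]
    _ ≤ t ^ n / n.factorial * t ^ (s - 1) := by
        gcongr
        · exact rpow_nonneg ht.1.le _
        · exact abs_expNegTail_le n ht.1.le
    _ = t ^ (s + n - 1) / n.factorial := by
        rw [div_mul_eq_mul_div, ← rpow_natCast, ← rpow_add ht.1]
        ring_nf

lemma integrableOn_Ioi_one_expNegTail_mul_rpow {n : ℕ} {s : ℝ} (hs : s + n < 1) :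
    IntegrableOn (fun t => expNegTail n t * t ^ (s - 1)) (Ioi 1) := by
  have hexp : IntegrableOn (fun t => exp (-t) * t ^ (s - 1)) (Ioi 1) := by
    refine (exp_neg_integrableOn_Ioi 1 zero_lt_one).mono'
      (Measurable.aestronglyMeasurable (by fun_prop)) ?_
    filter_upwards [ae_restrict_mem measurableSet_Ioi] with t (ht : 1 < t)
    have hs1 : s - 1 ≤ 0 := by linarith [(n.cast_nonneg : (0 : ℝ) ≤ n)]
    rw [norm_mul, norm_of_nonneg (exp_pos _).le, norm_of_nonneg (rpow_nonneg (by linarith) _),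
      neg_one_mul]
    exact mul_le_of_le_one_right (exp_pos _).le (rpow_le_one_of_one_le_of_nonpos ht.le hs1)
  have hpoly : IntegrableOn (fun t => t ^ (s - 1) * truncExpPrev n (-t)) (Ioi 1) := by
    have hsum : IntegrableOn (fun t => ∑ k ∈ Finset.range n,
        (-1 : ℝ) ^ k / k.factorial * t ^ (s - 1 + k)) (Ioi 1) := by
      refine integrable_finsetSum _ fun k hk => ?_
      have hk : (k : ℝ) + 1 ≤ n := by exact_mod_cast Finset.mem_range.mp hk
      exact (integrableOn_Ioi_rpow_of_lt (by linarith) zero_lt_one).const_mul _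
    refine hsum.congr_fun (fun t ht => ?_) measurableSet_Ioi
    rw [rpow_mul_truncExpPrev_neg n _ (zero_lt_one.trans ht)]
  refine (hexp.sub hpoly).congr_fun (fun t _ => ?_) measurableSet_Ioi
  simp only [Pi.sub_apply, expNegTail]
  ring

lemma integrableOn_expNegTail_mul_rpow {n : ℕ} {s : ℝ} (hs₀ : 0 < s + n) (hs₁ : s + n < 1) :
    IntegrableOn (fun t => expNegTail n t * t ^ (s - 1)) (Ioi 0) := by
  rw [← Ioc_union_Ioi_eq_Ioi zero_le_one]
  exact (integrableOn_Ioc_expNegTail_mul_rpow hs₀).union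
    (integrableOn_Ioi_one_expNegTail_mul_rpow hs₁)

lemma tendsto_rpow_mul_expNegTail_nhdsGT_zero {n : ℕ} {s : ℝ} (hs : 0 < s + n) :
    Tendsto (fun t => t ^ s * expNegTail n t) (𝓝[>] 0) (𝓝 0) := by
  have hpow : Tendsto (fun t : ℝ => t ^ (s + n) / n.factorial) (𝓝[>] 0) (𝓝 0) := by
    have h := ((continuousAt_rpow_const 0 (s + n) (Or.inr hs.le)).tendsto).div_const
      (n.factorial : ℝ)
    rw [zero_rpow hs.ne', zero_div] at h
    exact h.mono_left nhdsWithin_le_nhds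
  refine squeeze_zero_norm' ?_ hpow
  filter_upwards [self_mem_nhdsWithin] with t (ht : 0 < t)
  calc ‖t ^ s * expNegTail n t‖ = t ^ s * |expNegTail n t| := by
        rw [norm_mul, norm_eq_abs, norm_eq_abs, abs_of_nonneg (rpow_nonneg ht.le _)]
    _ ≤ t ^ s * (t ^ n / n.factorial) := by
        gcongr
        exact abs_expNegTail_le n ht.le
    _ = t ^ (s + n) / n.factorial := by
        rw [rpow_add ht, rpow_natCast, mul_div_assoc]

lemma tendsto_rpow_mul_expNegTail_atTop {n : ℕ} {s : ℝ} (hs : s + n < 1) :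
    Tendsto (fun t => t ^ s * expNegTail n t) atTop (𝓝 0) := by
  have hexp : Tendsto (fun t : ℝ => t ^ s * exp (-t)) atTop (𝓝 0) := by
    simpa using tendsto_rpow_mul_exp_neg_mul_atTop_nhds_zero s 1 zero_lt_one
  have hpoly : Tendsto (fun t : ℝ => ∑ k ∈ Finset.range n,
      (-1 : ℝ) ^ k / k.factorial * t ^ (s + k)) atTop (𝓝 0) := by
    rw [← Finset.sum_const_zero (s := Finset.range n)]
    refine tendsto_finsetSum _ fun k hk => ?_
    have hk : (k : ℝ) + 1 ≤ n := by exact_mod_cast Finset.mem_range.mp hk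
    simpa using (tendsto_rpow_neg_atTop (y := -(s + k)) (by linarith)).const_mul
      ((-1 : ℝ) ^ k / k.factorial)
  refine (sub_zero (0 : ℝ) ▸ hexp.sub hpoly).congr' ?_
  filter_upwards [eventually_gt_atTop 0] with t ht
  rw [expNegTail, mul_sub, rpow_mul_truncExpPrev_neg n s ht]

theorem integral_expNegTail_mul_rpow {n : ℕ} {s : ℝ} (hs₀ : 0 < s + n) (hs₁ : s + n < 1) :
    ∫ t in Ioi 0, expNegTail n t * t ^ (s - 1) = Gamma s := by
  induction n generalizing s with
  | zero =>
    rw [Gamma_eq_integral (by simpa using hs₀)]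
    refine setIntegral_congr_fun measurableSet_Ioi fun t _ => ?_
    simp [expNegTail, truncExpPrev]
  | succ n ih =>
    push_cast at hs₀ hs₁
    have hs : s ≠ 0 := by linarith [(n.cast_nonneg : (0 : ℝ) ≤ n)]
    have hint₁ := integrableOn_expNegTail_mul_rpow (n := n + 1) (s := s)
      (by push_cast; linarith) (by push_cast; linarith)
    have hint₂ : IntegrableOn (fun t => expNegTail n t * t ^ s) (Ioi 0) := by
      simpa using integrableOn_expNegTail_mul_rpow (n := n) (s := s + 1)
        (by linarith) (by linarith)
    have hint : IntegrableOn (fun t => s * t ^ (s - 1) * expNegTail (n + 1) t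
        + t ^ s * -expNegTail n t) (Ioi 0) :=
      IntegrableOn.congr_fun ((hint₁.const_mul s).sub hint₂)
        (fun t _ => by simp only [Pi.sub_apply]; ring) measurableSet_Ioi
    have hibp : ∫ t in Ioi 0, s * t ^ (s - 1) * expNegTail (n + 1) t
        + t ^ s * -expNegTail n t = 0 - 0 :=
      integral_Ioi_deriv_mul_eq_sub (u := fun t => t ^ s)
        (fun t ht => hasDerivAt_rpow_const (Or.inl (ne_of_gt ht)))
        (fun t _ => hasDerivAt_expNegTail_succ n t) hint
        (tendsto_rpow_mul_expNegTail_nhdsGT_zero (by push_cast; linarith))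
        (tendsto_rpow_mul_expNegTail_atTop (by push_cast; linarith))
    have hIH : ∫ t in Ioi 0, expNegTail n t * t ^ s = s * Gamma s := by
      rw [← Gamma_add_one hs]
      simpa using ih (s := s + 1) (by linarith) (by linarith)
    have hsplit : s * ∫ t in Ioi 0, expNegTail (n + 1) t * t ^ (s - 1) = s * Gamma s := by
      rw [← hIH, ← sub_eq_zero, ← integral_const_mul, ← integral_sub (hint₁.const_mul s) hint₂]
      refine (setIntegral_congr_fun measurableSet_Ioi fun t _ => ?_).trans
        (hibp.trans (sub_self 0))
      ring
    exact mul_left_cancel₀ hs hsplit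

lemma image_exp_neg_Ioi_zero : (fun t => exp (-t)) '' Ioi 0 = Ioo 0 1 := by
  ext u
  constructor
  · rintro ⟨t, ht, rfl⟩
    exact ⟨exp_pos _, exp_lt_one_iff.mpr (neg_lt_zero.mpr ht)⟩
  · rintro ⟨hu₀, hu₁⟩
    exact ⟨-log u, neg_pos.mpr (log_neg hu₀ hu₁), by simp [exp_log hu₀]⟩

theorem integral_Ioo_zero_one_eq_integral_comp_exp_neg {E : Type*} [NormedAddCommGroup E]
    [NormedSpace ℝ E] (g : ℝ → E) :
    ∫ u in Ioo 0 1, g u = ∫ t in Ioi 0, exp (-t) • g (exp (-t)) := by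
  rw [← image_exp_neg_Ioi_zero, integral_image_eq_integral_abs_deriv_smul measurableSet_Ioi
    (fun t _ => ((hasDerivAt_neg t).exp).hasDerivWithinAt)
    (fun a _ b _ hab => neg_injective (exp_injective hab))]
  refine setIntegral_congr_fun measurableSet_Ioi fun t _ => ?_
  rw [mul_neg_one, abs_neg, abs_of_pos (exp_pos _)]

theorem one_div_Gamma_eq_sin_div_pi_mul_Gamma_one_sub {z : ℝ} (hz : ∀ m : ℤ, z ≠ m) :
    1 / Gamma z = sin (π * z) / π * Gamma (1 - z) := by
  have hsin : sin (π * z) ≠ 0 := by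
    rw [sin_ne_zero_iff]
    intro m hm
    exact hz m (mul_left_cancel₀ pi_ne_zero (by rw [← hm]; ring))
  have hrefl := Gamma_mul_Gamma_one_sub z
  have hΓ : Gamma z ≠ 0 := Gamma_ne_zero fun m hm => hz (-m) (by simp [hm])
  field_simp
  rw [mul_right_comm, hrefl]
  field_simp

/-- Modified Euler integral of the second kind: for non-integer `z > 0` with `n = ⌊z⌋`,
`1/Γ(z) = (sin(πz)/π) ∫₀^1 (1 - e_{n-1}(log u)/u) (log(1/u))^{-z} du`. -/
theorem reciprocal_Gamma_unit_interval_rep (z : ℝ) (hz : 0 < z)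
    (hnint : ∀ m : ℤ, z ≠ (m : ℝ)) :
    1 / Real.Gamma z = (Real.sin (π * z) / π) *
      ∫ u in Set.Ioo (0 : ℝ) 1,
        (1 - truncExpPrev ⌊z⌋₊ (Real.log u) / u) * Real.log (1 / u) ^ (-z) := by
  set n := ⌊z⌋₊
  have hn : (n : ℝ) < z :=
    (Nat.floor_le hz.le).lt_of_ne fun h => hnint n (by exact_mod_cast h.symm)
  have hn' : z < n + 1 := Nat.lt_floor_add_one z
  have hsubst : ∫ u in Ioo 0 1, (1 - truncExpPrev n (log u) / u) * log (1 / u) ^ (-z)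
      = ∫ t in Ioi 0, expNegTail n t * t ^ ((1 - z) - 1) := by
    rw [integral_Ioo_zero_one_eq_integral_comp_exp_neg]
    refine setIntegral_congr_fun measurableSet_Ioi fun t _ => ?_
    rw [smul_eq_mul, log_exp, one_div, ← exp_neg, neg_neg, log_exp, sub_sub_cancel_left,
      expNegTail]
    field_simp
  rw [hsubst, integral_expNegTail_mul_rpow (by linarith) (by linarith),
    one_div_Gamma_eq_sin_div_pi_mul_Gamma_one_sub hnint]
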